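/- arXiv:2403.07618 — 5 statements merged into one kernel-verified Lean document; each statement's English description precedes it below -/
import Mathlib

section
/- Let P ∈ ℝ^{n×n} be a (row-)stochastic matrix, Π ∈ ℝ^{m×m} arbitrary, A ∈ ℝ^{m×n} arbitrary, π₀ ∈ ℝ^m and p₀ ∈ ℝ^n. Define the error vector e_k by e_kᵀ = π₀ᵀΠ^k A − p₀ᵀP^k. Then for all k, ‖e_k‖₁ ≤ ‖π₀ᵀA − p₀ᵀ‖₁ + Σ_{j=0}^{k−1} ⟨|π_j|, |ΠA − AP|·𝟙ₙ⟩, where π_jᵀ = π₀ᵀΠ^j. -/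
open Matrix BigOperators

noncomputable def l1 {n : ℕ} (v : Fin n → ℝ) : ℝ := ∑ i, |v i|

noncomputable def ninf {m n : ℕ} (A : Matrix (Fin m) (Fin n) ℝ) : ℝ :=
  ⨆ i, ∑ j, |A i j|

def IsStochastic {m n : ℕ} (A : Matrix (Fin m) (Fin n) ℝ) : Prop :=
  (∀ i j, 0 ≤ A i j) ∧ ∀ i, ∑ j, A i j = 1

def IsGenerator {n : ℕ} (Q : Matrix (Fin n) (Fin n) ℝ) : Prop :=
  (∀ i j, i ≠ j → 0 ≤ Q i j) ∧ ∀ i, ∑ j, Q i j = 0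

/-! The error obeys the one-step recursion `e_{k+1}ᵀ = e_kᵀ P + π_kᵀ (ΠA − AP)`. A stochastic
`P` does not increase the ℓ1 norm of a row vector, and `‖vᵀM‖₁ ≤ ⟨|v|, |M| 𝟙⟩`, so each step
adds at most `⟨|π_k|, |ΠA − AP| 𝟙⟩` to `‖e_k‖₁`; summing over the steps gives the bound. -/

lemma l1_add_le {n : ℕ} (v w : Fin n → ℝ) : l1 (v + w) ≤ l1 v + l1 w := by
  simp only [l1, Pi.add_apply, ← Finset.sum_add_distrib]
  exact Finset.sum_le_sum fun i _ => abs_add_le _ _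

lemma l1_vecMul_le {m n : ℕ} (v : Fin m → ℝ) (M : Matrix (Fin m) (Fin n) ℝ) :
    l1 (vecMul v M) ≤ ∑ χ, |v χ| * ∑ i, |M χ i| := by
  simp only [l1, vecMul, dotProduct, Finset.mul_sum, ← abs_mul]
  rw [Finset.sum_comm]
  exact Finset.sum_le_sum fun χ _ => Finset.abs_sum_le_sum_abs _ _

lemma IsStochastic.sum_abs_row {m n : ℕ} {P : Matrix (Fin m) (Fin n) ℝ} (hP : IsStochastic P)
    (i : Fin m) : ∑ j, |P i j| = 1 := by
  rw [← hP.2 i]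
  exact Finset.sum_congr rfl fun j _ => abs_of_nonneg (hP.1 i j)

lemma IsStochastic.l1_vecMul_le {m n : ℕ} {P : Matrix (Fin m) (Fin n) ℝ} (hP : IsStochastic P)
    (v : Fin m → ℝ) : l1 (vecMul v P) ≤ l1 v := by
  calc l1 (vecMul v P) ≤ ∑ χ, |v χ| * ∑ i, |P χ i| := _root_.l1_vecMul_le v P
    _ = l1 v := by simp only [hP.sum_abs_row, mul_one, l1]

lemma vecMul_pow_succ_mul_sub_vecMul_pow_succ {R ι κ : Type*} [Ring R] [Fintype ι] [Fintype κ]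
    [DecidableEq ι] [DecidableEq κ] (Q : Matrix ι ι R) (A : Matrix ι κ R) (P : Matrix κ κ R)
    (x : ι → R) (y : κ → R) (k : ℕ) :
    vecMul x (Q ^ (k + 1) * A) - vecMul y (P ^ (k + 1)) =
      vecMul (vecMul x (Q ^ k * A) - vecMul y (P ^ k)) P +
        vecMul (vecMul x (Q ^ k)) (Q * A - A * P) := by
  simp only [pow_succ, sub_vecMul, vecMul_sub, vecMul_vecMul, Matrix.mul_assoc]
  abel

lemma IsStochastic.l1_vecMul_pow_succ_mul_sub_le {m n : ℕ} {P : Matrix (Fin n) (Fin n) ℝ}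
    (hP : IsStochastic P) (Q : Matrix (Fin m) (Fin m) ℝ) (A : Matrix (Fin m) (Fin n) ℝ)
    (x : Fin m → ℝ) (y : Fin n → ℝ) (k : ℕ) :
    l1 (vecMul x (Q ^ (k + 1) * A) - vecMul y (P ^ (k + 1))) ≤
      l1 (vecMul x (Q ^ k * A) - vecMul y (P ^ k)) +
        ∑ χ, |vecMul x (Q ^ k) χ| * ∑ i, |(Q * A - A * P) χ i| := by
  rw [vecMul_pow_succ_mul_sub_vecMul_pow_succ]
  exact (l1_add_le _ _).trans (add_le_add (hP.l1_vecMul_le _) (_root_.l1_vecMul_le _ _))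

theorem stmt_3 {m n : ℕ} (P : Matrix (Fin n) (Fin n) ℝ) (hP : IsStochastic P)
    (Pm : Matrix (Fin m) (Fin m) ℝ) (A : Matrix (Fin m) (Fin n) ℝ)
    (π₀ : Fin m → ℝ) (p₀ : Fin n → ℝ) (k : ℕ) :
    l1 (Matrix.vecMul π₀ (Pm ^ k * A) - Matrix.vecMul p₀ (P ^ k)) ≤
      l1 (Matrix.vecMul π₀ A - p₀) +
        ∑ j ∈ Finset.range k,
          ∑ χ, |Matrix.vecMul π₀ (Pm ^ j) χ| * (∑ i, |(Pm * A - A * P) χ i|) := by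
  induction k with
  | zero => simp
  | succ k ih =>
    rw [Finset.sum_range_succ]
    linarith [hP.l1_vecMul_pow_succ_mul_sub_le Pm A π₀ p₀ k]
end

section
/- Let P be stochastic, and suppose ΠA = AP (dynamic-exactness). Then for any π₀ and p₀, ‖π₀ᵀΠ^k A − p₀ᵀP^k‖₁ ≤ ‖π₀ᵀA − p₀ᵀ‖₁ for all k ≥ 0. -/
open Matrix BigOperators

/-!
Dynamic exactness `Π A = A P` propagates to `Π ^ k A = A P ^ k`, so the error after `k` steps is
`(π₀ᵀ A - p₀ᵀ) P ^ k`. Powers of a stochastic matrix are stochastic, and a stochastic matrix is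
a contraction of row vectors in the `ℓ¹` norm.
-/

theorem isStochastic_iff_mem_rowStochastic {n : ℕ} {P : Matrix (Fin n) (Fin n) ℝ} :
    IsStochastic P ↔ P ∈ rowStochastic ℝ (Fin n) :=
  mem_rowStochastic_iff_sum.symm

theorem Matrix.pow_mul_eq_mul_pow_of_mul_eq {m n R : Type*} [Fintype m] [DecidableEq m]
    [Fintype n] [DecidableEq n] [Semiring R] {B : Matrix m m R} {A : Matrix m n R}
    {C : Matrix n n R} (h : B * A = A * C) (k : ℕ) : B ^ k * A = A * C ^ k := by
  induction k with
  | zero => simp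
  | succ k ih => rw [pow_succ, pow_succ, Matrix.mul_assoc, h, ← Matrix.mul_assoc, ih,
      Matrix.mul_assoc]

theorem Matrix.sum_abs_vecMul_le_of_mem_rowStochastic {n R : Type*} [Fintype n] [DecidableEq n]
    [Ring R] [LinearOrder R] [IsOrderedRing R] {M : Matrix n n R}
    (hM : M ∈ rowStochastic R n) (v : n → R) : ∑ j, |(v ᵥ* M) j| ≤ ∑ i, |v i| :=
  calc ∑ j, |(v ᵥ* M) j| ≤ ∑ j, ∑ i, |v i| * M i j := by
        gcongr with j
        refine (Finset.abs_sum_le_sum_abs _ _).trans_eq ?_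
        simp only [abs_mul, abs_of_nonneg (nonneg_of_mem_rowStochastic hM)]
    _ = ∑ i, |v i| := by
        rw [Finset.sum_comm]
        simp only [← Finset.mul_sum, sum_row_of_mem_rowStochastic hM, mul_one]

theorem stmt_7 {m n : ℕ} (P : Matrix (Fin n) (Fin n) ℝ) (hP : IsStochastic P)
    (Pm : Matrix (Fin m) (Fin m) ℝ) (A : Matrix (Fin m) (Fin n) ℝ)
    (hdyn : Pm * A = A * P) (π₀ : Fin m → ℝ) (p₀ : Fin n → ℝ) (k : ℕ) :
    l1 (Matrix.vecMul π₀ (Pm ^ k * A) - Matrix.vecMul p₀ (P ^ k)) ≤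
      l1 (Matrix.vecMul π₀ A - p₀) := by
  have hPk : P ^ k ∈ rowStochastic ℝ (Fin n) :=
    pow_mem (isStochastic_iff_mem_rowStochastic.mp hP) k
  have herror : π₀ ᵥ* (Pm ^ k * A) - p₀ ᵥ* P ^ k = (π₀ ᵥ* A - p₀) ᵥ* P ^ k := by
    rw [pow_mul_eq_mul_pow_of_mul_eq hdyn, sub_vecMul, vecMul_vecMul]
  rw [l1, l1, herror]
  exact sum_abs_vecMul_le_of_mem_rowStochastic hPk _
end

section
/- Assume ΘA = AQ where Q is a CTMC generator matrix, and assume π₀ᵀA ≥ p₀ᵀ entrywise. Then for all t ≥ 0, ‖π₀ᵀe^{Θt}A − p₀ᵀe^{Qt}‖₁ = ‖π₀ᵀA − p₀ᵀ‖₁ and π₀ᵀe^{Θt}A ≥ p₀ᵀe^{Qt} entrywise. -/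
open Matrix BigOperators

/-!
The intertwining `Θ * A = A * Q` passes to every power and hence to the exponential series, so
`π₀ᵀ e^{tΘ} A - p₀ᵀ e^{tQ} = (π₀ᵀ A - p₀ᵀ) e^{tQ}`. For a generator `Q` and `t ≥ 0` the matrix
`e^{tQ}` is stochastic: its rows sum to one because `Q 𝟙 = 0`, and it is nonnegative because
`tQ + c • 1` is nonnegative for large `c`. A stochastic matrix maps the nonnegative row vector
`π₀ᵀ A - p₀ᵀ` to a nonnegative row vector with the same total mass, i.e. the same `ℓ¹` norm.
-/

open NormedSpace
open scoped Nat

namespace Matrix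

variable {m n : Type*} [Fintype m] [DecidableEq m] [Fintype n] [DecidableEq n]

theorem hasSum_exp {𝕂 : Type*} [RCLike 𝕂] (M : Matrix m m 𝕂) :
    HasSum (fun k => (k ! : 𝕂)⁻¹ • M ^ k) (exp M) := by
  open scoped Norms.Operator in exact exp_series_hasSum_exp' M

theorem pow_mul_eq_mul_pow_of_mul_eq_s11 {α : Type*} [Semiring α] {Θ : Matrix m m α}
    {A : Matrix m n α} {Q : Matrix n n α} (h : Θ * A = A * Q) (k : ℕ) :
    Θ ^ k * A = A * Q ^ k := by
  induction k with
  | zero => simp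
  | succ k ih => rw [pow_succ', Matrix.mul_assoc, ih, ← Matrix.mul_assoc, h, Matrix.mul_assoc,
      ← pow_succ']

theorem exp_mul_eq_mul_exp_of_mul_eq {𝕂 : Type*} [RCLike 𝕂] {Θ : Matrix m m 𝕂}
    {A : Matrix m n 𝕂} {Q : Matrix n n 𝕂} (h : Θ * A = A * Q) :
    exp Θ * A = A * exp Q := by
  have hΘ : HasSum (fun k => ((k ! : 𝕂)⁻¹ • Θ ^ k) * A) (exp Θ * A) :=
    (hasSum_exp Θ).map (mulRightLinearMap m 𝕂 A) (continuous_id.matrix_mul continuous_const)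
  have hQ : HasSum (fun k => A * ((k ! : 𝕂)⁻¹ • Q ^ k)) (A * exp Q) :=
    (hasSum_exp Q).map (mulLeftLinearMap n 𝕂 A) (continuous_const.matrix_mul continuous_id)
  simp only [Matrix.smul_mul, Matrix.mul_smul, pow_mul_eq_mul_pow_of_mul_eq_s11 h] at hΘ hQ
  exact hΘ.unique hQ

theorem exp_mulVec_eq_self_of_mulVec_eq_zero {𝕂 : Type*} [RCLike 𝕂] {M : Matrix m m 𝕂}
    {v : m → 𝕂} (h : M *ᵥ v = 0) : exp M *ᵥ v = v := by
  have hcol : M * replicateCol Unit v = replicateCol Unit v * (0 : Matrix Unit Unit 𝕂) := by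
    rw [← replicateCol_mulVec, h, Matrix.mul_zero, replicateCol_zero]
  have := exp_mul_eq_mul_exp_of_mul_eq hcol
  rw [exp_zero, Matrix.mul_one, ← replicateCol_mulVec] at this
  exact replicateCol_injective this

theorem pow_nonneg_of_nonneg {M : Matrix m m ℝ} (h : ∀ i j, 0 ≤ M i j) (k : ℕ) (i j : m) :
    0 ≤ (M ^ k) i j := by
  induction k generalizing j with
  | zero => rw [pow_zero, one_apply]; split_ifs <;> norm_num
  | succ k ih =>
    rw [pow_succ, mul_apply]
    exact Finset.sum_nonneg fun l _ => mul_nonneg (ih l) (h l j)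

theorem exp_nonneg_of_nonneg {M : Matrix m m ℝ} (h : ∀ i j, 0 ≤ M i j) (i j : m) :
    0 ≤ exp M i j :=
  (Pi.hasSum.1 (Pi.hasSum.1 (hasSum_exp M) i) j).nonneg fun k =>
    mul_nonneg (by positivity) (pow_nonneg_of_nonneg h k i j)

theorem exp_nonneg_of_offDiag_nonneg {M : Matrix m m ℝ} (h : ∀ i j, i ≠ j → 0 ≤ M i j)
    (i j : m) : 0 ≤ exp M i j := by
  set c := ∑ l, |M l l|
  have hshift : ∀ i j, 0 ≤ (M + diagonal fun _ => c : Matrix m m ℝ) i j := by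
    intro i j
    rcases eq_or_ne i j with rfl | hij
    · have := Finset.single_le_sum (fun l _ => abs_nonneg (M l l)) (Finset.mem_univ i)
      simp only [add_apply, diagonal_apply_eq]
      linarith [neg_abs_le (M i i)]
    · simpa [diagonal_apply_ne _ hij] using h i j hij
  have hcomm : Commute M (diagonal fun _ => c) := by
    rw [← smul_one_eq_diagonal]
    exact (Commute.one_right M).smul_right c
  have hexp : exp (M + diagonal fun _ => c) = exp M * diagonal fun _ => Real.exp c := by
    rw [exp_add_of_commute _ _ hcomm, exp_diagonal, Pi.exp_def, Real.exp_eq_exp_ℝ]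
  have := exp_nonneg_of_nonneg hshift i j
  rw [hexp, mul_diagonal] at this
  exact nonneg_of_mul_nonneg_left this (Real.exp_pos c)

end Matrix

theorem IsGenerator.isStochastic_exp_smul {n : ℕ} {Q : Matrix (Fin n) (Fin n) ℝ}
    (hQ : IsGenerator Q) {t : ℝ} (ht : 0 ≤ t) : IsStochastic (exp (t • Q)) := by
  refine ⟨exp_nonneg_of_offDiag_nonneg fun i j hij => mul_nonneg ht (hQ.1 i j hij), fun i => ?_⟩
  have hrows : (t • Q) *ᵥ (fun _ => 1) = 0 := by
    ext i
    simp [mulVec, dotProduct, Matrix.smul_apply, ← Finset.mul_sum, hQ.2 i]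
  simpa [mulVec, dotProduct] using
    congrFun (exp_mulVec_eq_self_of_mulVec_eq_zero hrows) i

theorem IsStochastic.vecMul_nonneg {m n : ℕ} {P : Matrix (Fin m) (Fin n) ℝ}
    (hP : IsStochastic P) {v : Fin m → ℝ} (hv : ∀ i, 0 ≤ v i) (j : Fin n) : 0 ≤ (v ᵥ* P) j :=
  dotProduct_nonneg_of_nonneg hv fun i => hP.1 i j

theorem IsStochastic.l1_vecMul {m n : ℕ} {P : Matrix (Fin m) (Fin n) ℝ} (hP : IsStochastic P)
    {v : Fin m → ℝ} (hv : ∀ i, 0 ≤ v i) : l1 (v ᵥ* P) = l1 v := by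
  calc l1 (v ᵥ* P) = ∑ j, ∑ i, v i * P i j :=
        Finset.sum_congr rfl fun j _ => abs_of_nonneg (hP.vecMul_nonneg hv j)
    _ = ∑ i, v i * ∑ j, P i j := by rw [Finset.sum_comm]; simp only [Finset.mul_sum]
    _ = l1 v := Finset.sum_congr rfl fun i _ => by rw [hP.2 i, mul_one, abs_of_nonneg (hv i)]

theorem stmt_11 {m n : ℕ} (Q : Matrix (Fin n) (Fin n) ℝ) (hQ : IsGenerator Q)
    (Θ : Matrix (Fin m) (Fin m) ℝ) (A : Matrix (Fin m) (Fin n) ℝ)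
    (hdyn : Θ * A = A * Q) (π₀ : Fin m → ℝ) (p₀ : Fin n → ℝ)
    (hord : ∀ i, p₀ i ≤ Matrix.vecMul π₀ A i) (t : ℝ) (ht : 0 ≤ t) :
    l1 (Matrix.vecMul π₀ (NormedSpace.exp (t • Θ) * A) -
          Matrix.vecMul p₀ (NormedSpace.exp (t • Q))) =
        l1 (Matrix.vecMul π₀ A - p₀) ∧
    ∀ i, Matrix.vecMul p₀ (NormedSpace.exp (t • Q)) i ≤
        Matrix.vecMul π₀ (NormedSpace.exp (t • Θ) * A) i := by
  have hP := hQ.isStochastic_exp_smul ht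
  have hgap_nonneg : ∀ i, 0 ≤ (π₀ ᵥ* A - p₀) i := fun i => sub_nonneg.2 (hord i)
  have hdyn_t : (t • Θ) * A = A * (t • Q) := by rw [Matrix.smul_mul, hdyn, Matrix.mul_smul]
  have hflow :
      π₀ ᵥ* (exp (t • Θ) * A) - p₀ ᵥ* exp (t • Q) = (π₀ ᵥ* A - p₀) ᵥ* exp (t • Q) := by
    rw [exp_mul_eq_mul_exp_of_mul_eq hdyn_t, ← vecMul_vecMul, sub_vecMul]
  refine ⟨by rw [hflow, hP.l1_vecMul hgap_nonneg], fun i => ?_⟩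
  have := hP.vecMul_nonneg hgap_nonneg i
  rwa [← hflow, Pi.sub_apply, sub_nonneg] at this
end

section
/- Let A ∈ ℝ^{m×n} have all entries nonnegative with at least one strictly positive entry in every row, let P ∈ ℝ^{n×n} be stochastic, and let Π ∈ ℝ^{m×m} satisfy ‖ΠA − AP‖_∞ > 0. Then there exist a probability distribution p₀ on {1,…,n} and a nonnegative vector π₀ ∈ ℝ^m with π₀ᵀA = p₀ᵀ such that ‖π₀ᵀΠA − p₀ᵀP‖₁ = ‖π₀‖₁ · ‖ΠA − AP‖_∞. -/
open Matrix BigOperators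

/-!
Take a row `χ` of `E = ΠA - AP` attaining `‖E‖_∞`, let `s > 0` be the sum of row `χ` of `A`, and
put `π₀ = e_χ / s`, so that `p₀ = π₀ᵀA` is row `χ` of `A` normalised to a probability
distribution. Then `π₀ᵀΠA - p₀ᵀP = π₀ᵀE` is row `χ` of `E` divided by `s`, whose `ℓ¹` norm is
`‖E‖_∞ / s = ‖π₀‖₁ ‖E‖_∞`.
-/

lemma l1_smul {n : ℕ} (c : ℝ) (v : Fin n → ℝ) : l1 (c • v) = |c| * l1 v := by
  simp only [l1, Pi.smul_apply, smul_eq_mul, abs_mul, Finset.mul_sum]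

lemma l1_single {n : ℕ} (i : Fin n) (c : ℝ) : l1 (Pi.single i c) = |c| := by
  rw [l1, Finset.sum_eq_single i (fun j _ hj => by simp [hj]) (by simp)]
  simp

lemma exists_ninf_eq_row_of_pos {m n : ℕ} {M : Matrix (Fin m) (Fin n) ℝ} (h : 0 < ninf M) :
    ∃ χ, ninf M = ∑ j, |M χ j| := by
  have : Nonempty (Fin m) := by
    by_contra hm
    rw [not_nonempty_iff] at hm
    simp [ninf] at h
  obtain ⟨χ, hχ⟩ := Finite.exists_max fun i => ∑ j, |M i j|
  exact ⟨χ, le_antisymm (ciSup_le hχ) (le_ciSup (f := fun i => ∑ j, |M i j|)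
    (Finite.bddAbove_range _) χ)⟩

theorem stmt_14_general {m n : ℕ} (A : Matrix (Fin m) (Fin n) ℝ)
    (hA0 : ∀ χ i, 0 ≤ A χ i) (hArow : ∀ χ, ∃ i, 0 < A χ i)
    (P : Matrix (Fin n) (Fin n) ℝ)
    (Pm : Matrix (Fin m) (Fin m) ℝ) (herr : 0 < ninf (Pm * A - A * P)) :
    ∃ (p₀ : Fin n → ℝ) (π₀ : Fin m → ℝ),
      (∀ i, 0 ≤ p₀ i) ∧ (∑ i, p₀ i = 1) ∧ (∀ χ, 0 ≤ π₀ χ) ∧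
      Matrix.vecMul π₀ A = p₀ ∧
      l1 (Matrix.vecMul π₀ (Pm * A) - Matrix.vecMul p₀ P) =
        l1 π₀ * ninf (Pm * A - A * P) := by
  obtain ⟨χ, hχ⟩ := exists_ninf_eq_row_of_pos herr
  obtain ⟨i₀, hi₀⟩ := hArow χ
  have hs : 0 < ∑ j, A χ j :=
    Finset.sum_pos' (fun j _ => hA0 χ j) ⟨i₀, Finset.mem_univ _, hi₀⟩
  set π₀ : Fin m → ℝ := Pi.single χ (∑ j, A χ j)⁻¹
  refine ⟨π₀ ᵥ* A, π₀, fun j => ?_, ?_, fun i => ?_, rfl, ?_⟩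
  · simpa [π₀] using mul_nonneg (inv_nonneg.mpr hs.le) (hA0 χ j)
  · simp [π₀, ← Finset.mul_sum, inv_mul_cancel₀ hs.ne']
  · exact (show 0 ≤ π₀ from Pi.single_nonneg.mpr (inv_nonneg.mpr hs.le)) i
  · rw [vecMul_vecMul, ← vecMul_sub, single_vecMul, l1_smul, l1_single, hχ]
    rfl

theorem stmt_14 {m n : ℕ} (A : Matrix (Fin m) (Fin n) ℝ)
    (hA0 : ∀ χ i, 0 ≤ A χ i) (hArow : ∀ χ, ∃ i, 0 < A χ i)
    (P : Matrix (Fin n) (Fin n) ℝ) (hP : IsStochastic P)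
    (Pm : Matrix (Fin m) (Fin m) ℝ) (herr : 0 < ninf (Pm * A - A * P)) :
    ∃ (p₀ : Fin n → ℝ) (π₀ : Fin m → ℝ),
      (∀ i, 0 ≤ p₀ i) ∧ (∑ i, p₀ i = 1) ∧ (∀ χ, 0 ≤ π₀ χ) ∧
      Matrix.vecMul π₀ A = p₀ ∧
      l1 (Matrix.vecMul π₀ (Pm * A) - Matrix.vecMul p₀ P) =
        l1 π₀ * ninf (Pm * A - A * P) :=
  stmt_14_general A hA0 hArow P Pm herr
end

section
/- Let P be the transition matrix of a Markov chain on state space S with partition Ω, aggregation matrix Λ ∈ ℝ^{n×m} (indicator columns of the partition blocks) and disaggregation matrix A ∈ ℝ^{m×n} whose rows are probability distributions α_σ supported on the blocks σ ∈ Ω (so AΛ = I). If the partition is exactly lumpable, i.e., for all states s,s' in the same block and every block ρ, Σ_{r∈ρ} P(r,s) = Σ_{r∈ρ} P(r,s'), and if each α_σ is the uniform distribution on σ, then with Π = APΛ one has ΠA = AP. -/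
/-! Right multiplication by `Λ A` replaces each column of a matrix by the average of its columns
over the block, so it fixes matrices whose columns are constant on blocks. Exact lumpability makes
the columns of `A P`, whose entries are block averages of incoming probabilities,
constant on blocks; hence `(A P Λ) A = A P`. -/

open Matrix BigOperators

/-- indicator (aggregation) matrix Λ of a partition given by `ω`. -/
def indΛ {n m : ℕ} (ω : Fin n → Fin m) : Matrix (Fin n) (Fin m) ℝ :=
  fun s σ => if ω s = σ then 1 else 0

/-- size of the block of `ρ`. -/
def blockCard {n m : ℕ} (ω : Fin n → Fin m) (ρ : Fin m) : ℕ :=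
  (Finset.univ.filter fun s => ω s = ρ).card

/-- disaggregation matrix with uniform α distributions. -/
noncomputable def uniformA {n m : ℕ} (ω : Fin n → Fin m) : Matrix (Fin m) (Fin n) ℝ :=
  fun σ s => if ω s = σ then ((blockCard ω σ : ℝ))⁻¹ else 0

/-- disaggregation matrix with rows the α distributions. -/
def weightA {n m : ℕ} (ω : Fin n → Fin m) (α : Fin n → ℝ) : Matrix (Fin m) (Fin n) ℝ :=
  fun σ s => if ω s = σ then α s else 0

theorem blockCard_pos {n m : ℕ} (ω : Fin n → Fin m) (s : Fin n) : 0 < blockCard ω (ω s) :=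
  Finset.card_pos.mpr ⟨s, by simp⟩

theorem uniformA_mul_apply {n m : ℕ} {κ : Type*} (ω : Fin n → Fin m)
    (M : Matrix (Fin n) κ ℝ) (σ : Fin m) (t : κ) :
    (uniformA ω * M) σ t =
      (blockCard ω σ : ℝ)⁻¹ * ∑ r ∈ Finset.univ.filter (fun r => ω r = σ), M r t := by
  rw [Matrix.mul_apply, Finset.mul_sum, Finset.sum_filter]
  refine Finset.sum_congr rfl fun r _ => ?_
  unfold uniformA
  split_ifs <;> simp

theorem mul_indΛ_apply {n m : ℕ} {ι : Type*} (ω : Fin n → Fin m)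
    (M : Matrix ι (Fin n) ℝ) (i : ι) (ρ : Fin m) :
    (M * indΛ ω) i ρ = ∑ t ∈ Finset.univ.filter (fun t => ω t = ρ), M i t := by
  rw [Matrix.mul_apply, Finset.sum_filter]
  refine Finset.sum_congr rfl fun t _ => ?_
  unfold indΛ
  split_ifs <;> simp

theorem mul_uniformA_apply {n m : ℕ} {ι : Type*} (ω : Fin n → Fin m)
    (N : Matrix ι (Fin m) ℝ) (i : ι) (s : Fin n) :
    (N * uniformA ω) i s = N i (ω s) * (blockCard ω (ω s) : ℝ)⁻¹ := by
  rw [Matrix.mul_apply, Finset.sum_eq_single (ω s)]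
  · simp [uniformA]
  · intro ρ _ hρ
    simp [uniformA, Ne.symm hρ]
  · simp

theorem mul_indΛ_mul_uniformA_of_blockConst {n m : ℕ} {ι : Type*} (ω : Fin n → Fin m)
    (M : Matrix ι (Fin n) ℝ) (hM : ∀ i s t, ω t = ω s → M i t = M i s) :
    M * indΛ ω * uniformA ω = M := by
  ext i s
  have hsum : (M * indΛ ω) i (ω s) = blockCard ω (ω s) * M i s := by
    rw [mul_indΛ_apply, Finset.sum_congr rfl fun t ht => hM i s t (Finset.mem_filter.mp ht).2,
      Finset.sum_const, nsmul_eq_mul, blockCard]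
  have hcard : (blockCard ω (ω s) : ℝ) ≠ 0 := Nat.cast_ne_zero.mpr (blockCard_pos ω s).ne'
  rw [mul_uniformA_apply, hsum]
  field_simp

theorem uniformA_mul_apply_eq_of_lumpable {n m : ℕ} (ω : Fin n → Fin m)
    (P : Matrix (Fin n) (Fin n) ℝ)
    (hlump : ∀ s s', ω s = ω s' → ∀ ρ : Fin m,
      ∑ r ∈ Finset.univ.filter (fun r => ω r = ρ), P r s =
      ∑ r ∈ Finset.univ.filter (fun r => ω r = ρ), P r s')
    (σ : Fin m) (s t : Fin n) (hts : ω t = ω s) :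
    (uniformA ω * P) σ t = (uniformA ω * P) σ s := by
  rw [uniformA_mul_apply, uniformA_mul_apply, hlump t s hts σ]

theorem stmt_15_general {n m : ℕ} (ω : Fin n → Fin m)
    (P : Matrix (Fin n) (Fin n) ℝ)
    (hlump : ∀ s s', ω s = ω s' → ∀ ρ : Fin m,
      ∑ r ∈ Finset.univ.filter (fun r => ω r = ρ), P r s =
      ∑ r ∈ Finset.univ.filter (fun r => ω r = ρ), P r s') :
    (uniformA ω * P * indΛ ω) * uniformA ω = uniformA ω * P :=
  mul_indΛ_mul_uniformA_of_blockConst ω (uniformA ω * P)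
    (uniformA_mul_apply_eq_of_lumpable ω P hlump)

theorem stmt_15 {n m : ℕ} (ω : Fin n → Fin m) (hω : Function.Surjective ω)
    (P : Matrix (Fin n) (Fin n) ℝ) (hP : IsStochastic P)
    (hlump : ∀ s s', ω s = ω s' → ∀ ρ : Fin m,
      ∑ r ∈ Finset.univ.filter (fun r => ω r = ρ), P r s =
      ∑ r ∈ Finset.univ.filter (fun r => ω r = ρ), P r s') :
    (uniformA ω * P * indΛ ω) * uniformA ω = uniformA ω * P :=
  stmt_15_general ω P hlump
end
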